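/- Let τ ∈ S_n be a permutation that is a product of an (n-1)-cycle on {1,...,n-1} and the fixed point n, and let q be an integer with d = gcd(q, n-1). Then τ^q is conjugate in S_n to an element of the Young subgroup S_{n-k} × S_k if and only if (n-1)/d divides k or (n-1)/d divides k-1. -/

import Mathlib

/-!
Conjugating `τ ^ q` into `S_{n-k} × S_k` amounts to finding a `τ ^ q`-invariant `k`-subset.
Off its fixed point, `τ ^ q` generates a cyclic group of order `m = (n - 1) / gcd(q, n - 1)`
acting freely, so an invariant subset of the support has size divisible by `m`; conversely,
unions of `a ≤ gcd(q, n - 1)` cycles of `τ ^ gcd(q, n - 1)` realise every multiple of `m` up to `n - 1`.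
Adding or not the fixed point gives the sizes `k` with `m ∣ k` or `m ∣ k - 1`.
-/

/-- The Young subgroup `S_{n-k} × S_k ≤ S_n` of permutations preserving the
partition of `{0, ..., n-1}` into the first `n - k` and the last `k` letters. -/
def YoungSubgroup (n k : ℕ) : Subgroup (Equiv.Perm (Fin n)) where
  carrier := {g | ∀ i : Fin n, ((g i : ℕ) < n - k ↔ (i : ℕ) < n - k)}
  one_mem' := fun _ => Iff.rfl
  mul_mem' := by
    intro g h hg hh i
    simpa [Equiv.Perm.mul_apply] using (hg (h i)).trans (hh i)
  inv_mem' := by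
    intro g hg i
    simpa using (hg (g⁻¹ i)).symm

open Equiv Finset MulAction
open scoped Pointwise

theorem MulAction.exists_conj_mem_stabilizer_iff {G X : Type*} [Group G] [MulAction G X]
    (x : X) (σ : G) :
    (∃ g : G, g * σ * g⁻¹ ∈ stabilizer G x) ↔
      ∃ y ∈ orbit G x, σ ∈ stabilizer G y := by
  simp only [mem_stabilizer_iff, mul_smul]
  constructor
  · rintro ⟨g, hg⟩
    exact ⟨g⁻¹ • x, mem_orbit x g⁻¹, eq_inv_smul_iff.2 hg⟩
  · rintro ⟨_, ⟨g, rfl⟩, hg⟩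
    exact ⟨g⁻¹, by rw [inv_inv, inv_smul_eq_iff, hg]⟩

theorem MulAction.card_dvd_card_of_stabilizer_eq_bot {G X : Type*} [Group G] [MulAction G X]
    (h : ∀ x : X, stabilizer G x = ⊥) : Nat.card G ∣ Nat.card X :=
  ⟨_, by rw [Nat.card_congr (selfEquivOrbitsQuotientProd h), Nat.card_prod, mul_comm]⟩

protected theorem IsOfFinOrder.orderOf_zpow {G : Type*} [Group G] {x : G} (hx : IsOfFinOrder x)
    (q : ℤ) : orderOf (x ^ q) = orderOf x / Int.gcd q (orderOf x) := by
  obtain ⟨j, rfl | rfl⟩ := Int.eq_nat_or_neg q <;>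
    simp [hx.orderOf_pow, Int.gcd, Nat.gcd_comm]

theorem Finset.mem_orbit_perm_iff {α : Type*} [DecidableEq α] {s t : Finset α} :
    t ∈ orbit (Perm α) s ↔ #t = #s := by
  refine ⟨fun ⟨g, hg⟩ => hg ▸ card_smul_finset g s, fun h => ?_⟩
  have := Set.powersetCard.isPretransitive (α := α) (n := #s)
  obtain ⟨g, hg⟩ := exists_smul_eq (Perm α) (⟨s, rfl⟩ : Set.powersetCard α #s) ⟨t, h⟩
  exact ⟨g, by simpa using congr_arg Subtype.val hg⟩

theorem Equiv.Perm.orderOf_dvd_card_of_zpow_apply_eq_self {α : Type*} [DecidableEq α]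
    {σ : Perm α} {U : Finset α} (hU : σ ∈ stabilizer (Perm α) U)
    (hfree : ∀ x ∈ U, ∀ i : ℤ, (σ ^ i) x = x → σ ^ i = 1) :
    orderOf σ ∣ #U := by
  rcases U.eq_empty_or_nonempty with rfl | ⟨x₀, hx₀⟩
  · simp
  set ρ := σ.subtypePerm (mem_stabilizer_finset.1 hU)
  have hρ : ∀ i : ℤ, ρ ^ i = 1 ↔ σ ^ i = 1 := fun i =>
    ⟨fun h => hfree x₀ hx₀ i <| by
        simpa [ρ] using congr_arg Subtype.val (Perm.ext_iff.1 h ⟨x₀, hx₀⟩),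
      fun h => by ext; simp [ρ, h]⟩
  have hρfree : ∀ x : U, stabilizer (Subgroup.zpowers ρ) x = ⊥ := by
    rintro ⟨x, hx⟩
    rw [eq_bot_iff]
    rintro ⟨g, hg⟩ hgx
    obtain ⟨i, rfl⟩ := Subgroup.mem_zpowers_iff.1 hg
    rw [mem_stabilizer_iff, Subgroup.mk_smul, Perm.smul_def] at hgx
    simpa [hρ] using hfree x hx i (by simpa [ρ] using congr_arg Subtype.val hgx)
  have hord : orderOf ρ = orderOf σ := by
    rw [orderOf_eq_orderOf_iff]
    intro i
    exact_mod_cast hρ i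
  have := card_dvd_card_of_stabilizer_eq_bot hρfree
  rwa [Nat.card_zpowers, hord, Nat.card_eq_fintype_card, Fintype.card_coe] at this

theorem Equiv.Perm.IsCycle.isCycleOn_support {α : Type*} [Fintype α] [DecidableEq α]
    {f : Perm α} (hf : f.IsCycle) : f.IsCycleOn f.support := by
  rw [coe_support_eq_set_support]
  exact hf.isCycleOn

theorem Equiv.Perm.IsCycle.zpow_eq_one_iff' {α : Type*} [Fintype α] [DecidableEq α]
    {f : Perm α} (hf : f.IsCycle) {x : α} (hx : x ∈ f.support) {i : ℤ} :
    f ^ i = 1 ↔ (f ^ i) x = x := by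
  rw [← orderOf_dvd_iff_zpow_eq_one, hf.orderOf, hf.isCycleOn_support.zpow_apply_eq hx]

theorem Equiv.Perm.IsCycle.exists_subset_support_pow_mem_stabilizer {α : Type*} [Fintype α]
    [DecidableEq α] {τ : Perm α} (hτ : τ.IsCycle) {d : ℕ} (hd : d ∣ #τ.support) {a : ℕ}
    (ha : a ≤ d) :
    ∃ V ⊆ τ.support, τ ^ d ∈ stabilizer (Perm α) V ∧ #V = a * (#τ.support / d) := by
  obtain ⟨x₀, hx₀⟩ := hτ.nonempty_support
  have hd0 : 0 < d := Nat.pos_of_dvd_of_pos hd (card_pos.2 ⟨x₀, hx₀⟩)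
  have hpow (i j : ℕ) : (τ ^ i) x₀ = (τ ^ j) x₀ ↔ i ≡ j [MOD #τ.support] :=
    hτ.isCycleOn_support.pow_apply_eq_pow_apply hx₀
  obtain ⟨m, hm⟩ := hd
  rw [hm] at hpow ⊢
  rw [Nat.mul_div_cancel_left m hd0]
  have hlt : ∀ {i j}, i < d → j < m → i + d * j < d * m := fun hi hj => by nlinarith
  have hdivmod : ∀ {i j}, i < d → (i + d * j) / d = j ∧ (i + d * j) % d = i :=
    fun hi => (Nat.div_mod_unique hd0).2 ⟨rfl, hi⟩
  -- the `τ ^ d`-cycles (of length `m`) through `τ ^ i x₀` for `i < a`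
  let f : ℕ × ℕ → α := fun ij => (τ ^ (ij.1 + d * ij.2)) x₀
  refine ⟨(range a ×ˢ range m).image f, ?_, ?_, ?_⟩
  · exact image_subset_iff.2 fun _ _ => pow_apply_mem_support.2 hx₀
  · rw [mem_stabilizer_finset']
    simp only [mem_image, mem_product, mem_range, Prod.exists]
    rintro _ ⟨i, j, ⟨hi, hj⟩, rfl⟩
    refine ⟨i, (j + 1) % m, ⟨hi, Nat.mod_lt _ (by omega)⟩, ?_⟩
    simp only [f, Perm.smul_def, ← Perm.mul_apply, ← pow_add, hpow]
    calc i + d * ((j + 1) % m) ≡ i + d * (j + 1) [MOD d * m] :=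
          (Nat.ModEq.mul_left' d (Nat.mod_modEq _ _)).add_left i
      _ = d + (i + d * j) := by ring
  · rw [card_image_of_injOn, card_product, card_range, card_range]
    rintro ⟨i, j⟩ hij ⟨i', j'⟩ hij' he
    simp only [coe_product, coe_range, Set.mem_prod, Set.mem_Iio] at hij hij'
    have he' : i + d * j = i' + d * j' :=
      ((hpow _ _).1 he).eq_of_lt_of_lt (hlt (by omega) hij.2) (hlt (by omega) hij'.2)
    obtain ⟨hj, hi⟩ := hdivmod (j := j) (by omega : i < d)
    obtain ⟨hj', hi'⟩ := hdivmod (j := j') (by omega : i' < d)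
    rw [he'] at hj hi
    exact Prod.ext (hi.symm.trans hi') (hj.symm.trans hj')

theorem Equiv.Perm.IsCycle.exists_subset_support_zpow_mem_stabilizer {α : Type*} [Fintype α]
    [DecidableEq α] {τ : Perm α} (hτ : τ.IsCycle) (q : ℤ) {j : ℕ} (hj : j ≤ #τ.support)
    (hdvd : orderOf (τ ^ q) ∣ j) :
    ∃ V ⊆ τ.support, τ ^ q ∈ stabilizer (Perm α) V ∧ #V = j := by
  set d := Int.gcd q #τ.support
  have hd : d ∣ #τ.support := Int.natCast_dvd_natCast.1 (Int.gcd_dvd_right _ _)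
  have hord : orderOf (τ ^ q) = #τ.support / d := by
    rw [isOfFinOrder_of_finite τ |>.orderOf_zpow, hτ.orderOf]
  have hdm : #τ.support / (#τ.support / d) = d :=
    Nat.div_div_self hd hτ.nonempty_support.card_pos.ne'
  have ha : j / orderOf (τ ^ q) ≤ d :=
    calc j / orderOf (τ ^ q) ≤ #τ.support / orderOf (τ ^ q) := Nat.div_le_div_right hj
      _ = d := by rw [hord, hdm]
  obtain ⟨V, hVsupp, hV, hVcard⟩ := hτ.exists_subset_support_pow_mem_stabilizer hd ha
  refine ⟨V, hVsupp, ?_, ?_⟩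
  · rw [← Int.mul_ediv_cancel' (Int.gcd_dvd_left q #τ.support), zpow_mul, zpow_natCast]
    exact Subgroup.zpow_mem _ hV _
  · rw [hVcard, ← hord, Nat.div_mul_cancel hdvd]

theorem Equiv.Perm.IsCycle.exists_card_eq_zpow_mem_stabilizer_iff {α : Type*} [Fintype α]
    [DecidableEq α] {τ : Perm α} (hτ : τ.IsCycle) (hsupp : #τ.support + 1 = Fintype.card α)
    (q : ℤ) {k : ℕ} (hk : k ≤ Fintype.card α) :
    (∃ U : Finset α, #U = k ∧ τ ^ q ∈ stabilizer (Perm α) U) ↔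
      orderOf (τ ^ q) ∣ k ∨ orderOf (τ ^ q) ∣ k - 1 := by
  obtain ⟨p, hp⟩ := card_eq_one.1 (by rw [card_compl]; omega : #τ.supportᶜ = 1)
  have hsupp_iff : ∀ x, x ∈ τ.support ↔ x ≠ p := fun x => by
    rw [ne_eq, ← mem_singleton, ← hp, mem_compl, not_not]
  have hfix : (τ ^ q) p = p := zpow_apply_eq_self_of_apply_eq_self
    (notMem_support.1 ((hsupp_iff p).not.2 (not_not.2 rfl))) q
  constructor
  · rintro ⟨U, rfl, hU⟩
    have hstab : τ ^ q ∈ stabilizer (Perm α) (U.erase p) := by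
      rw [mem_stabilizer_finset] at hU ⊢
      intro x
      simp only [Perm.smul_def] at hU ⊢
      rw [mem_erase, mem_erase, (τ ^ q).injective.ne_iff' hfix, hU x]
    have hdvd := orderOf_dvd_card_of_zpow_apply_eq_self hstab fun x hx i hi => by
      rw [← zpow_mul] at hi ⊢
      exact (hτ.zpow_eq_one_iff' ((hsupp_iff x).2 (ne_of_mem_erase hx))).2 hi
    by_cases hpU : p ∈ U
    · exact Or.inr (by rwa [card_erase_of_mem hpU] at hdvd)
    · exact Or.inl (by rwa [erase_eq_of_notMem hpU] at hdvd)
  · rintro (hdvd | hdvd)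
    · rcases le_or_gt k #τ.support with hkN | hkN
      · obtain ⟨V, -, hV, hVcard⟩ := hτ.exists_subset_support_zpow_mem_stabilizer q hkN hdvd
        exact ⟨V, hVcard, hV⟩
      · exact ⟨univ, by rw [card_univ]; omega, by simp⟩
    · rcases Nat.eq_zero_or_pos k with rfl | hk1
      · exact ⟨∅, rfl, by simp⟩
      obtain ⟨V, hVsupp, hV, hVcard⟩ :=
        hτ.exists_subset_support_zpow_mem_stabilizer q (by omega : k - 1 ≤ _) hdvd
      have hpV : p ∉ V := fun h => (hsupp_iff p).1 (hVsupp h) rfl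
      refine ⟨insert p V, by rw [card_insert_of_notMem hpV, hVcard]; omega, ?_⟩
      rw [mem_stabilizer_finset'] at hV ⊢
      intro x hx
      rcases mem_insert.1 hx with rfl | hx
      · simp [Perm.smul_def, hfix]
      · exact mem_insert_of_mem (hV hx)

theorem Fin.card_filter_sub_le_val {n k : ℕ} (hk : k ≤ n) :
    #(univ.filter fun i : Fin n => n - k ≤ (i : ℕ)) = k := by
  have hmap : (univ.filter fun i : Fin n => n - k ≤ (i : ℕ)).map Fin.valEmbedding =
      Ico (n - k) n := by
    ext j
    simp only [mem_map, mem_filter, mem_univ, true_and, Fin.valEmbedding_apply, mem_Ico]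
    exact ⟨fun ⟨i, hi, hij⟩ => hij ▸ ⟨hi, i.2⟩,
      fun ⟨hj, hjn⟩ => ⟨⟨j, hjn⟩, hj, rfl⟩⟩
  rw [← card_map, hmap, Nat.card_Ico]
  omega

theorem youngSubgroup_eq_stabilizer (n k : ℕ) :
    YoungSubgroup n k =
      stabilizer (Perm (Fin n)) (univ.filter fun i : Fin n => n - k ≤ (i : ℕ)) := by
  ext g
  rw [mem_stabilizer_finset]
  simp only [Perm.smul_def, mem_filter, mem_univ, true_and, ← not_lt, not_iff_not]
  rfl

theorem exists_conj_mem_youngSubgroup_iff {n k : ℕ} (hk : k ≤ n) (σ : Perm (Fin n)) :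
    (∃ g : Perm (Fin n), g * σ * g⁻¹ ∈ YoungSubgroup n k) ↔
      ∃ U : Finset (Fin n), #U = k ∧ σ ∈ stabilizer (Perm (Fin n)) U := by
  simp only [youngSubgroup_eq_stabilizer, exists_conj_mem_stabilizer_iff, mem_orbit_perm_iff,
    Fin.card_filter_sub_le_val hk]

theorem statement5 (n k : ℕ) (hk : k ≤ n)
    (τ : Equiv.Perm (Fin n)) (hτ : τ.IsCycle) (hsupp : τ.support.card = n - 1)
    (q : ℤ) :
    (∃ g : Equiv.Perm (Fin n), g * τ ^ q * g⁻¹ ∈ YoungSubgroup n k) ↔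
      ((n - 1) / Int.gcd q (n - 1) ∣ k ∨ (n - 1) / Int.gcd q (n - 1) ∣ k - 1) := by
  have hn : 1 ≤ n := by have := hτ.two_le_card_support; omega
  have hord : orderOf (τ ^ q) = (n - 1) / Int.gcd q (n - 1) := by
    rw [(isOfFinOrder_of_finite τ).orderOf_zpow, hτ.orderOf, hsupp, Nat.cast_sub hn, Nat.cast_one]
  rw [exists_conj_mem_youngSubgroup_iff hk, ← hord]
  exact hτ.exists_card_eq_zpow_mem_stabilizer_iff (by rw [hsupp, Fintype.card_fin]; omega) q
    (by rwa [Fintype.card_fin])
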